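/- The partition lattice Π(X) of a finite set X with |X| ≥ 3 is not half-factorial with respect to atomic decompositions without repetition: there exists a partition admitting two atomic decompositions (sets of atoms with join π) of different cardinalities. -/

import Mathlib

variable {X : Type*} [Fintype X] [DecidableEq X]

/-- The atom of the partition lattice whose only nonsingleton block is `{x, y}`. -/
def pairSetoid (x y : X) : Setoid X where
  r a b := a = b ∨ (a = x ∧ b = y) ∨ (a = y ∧ b = x)
  iseqv := by
    refine ⟨fun a => Or.inl rfl, ?_, ?_⟩
    · intro a b h; tauto
    · intro a b c h1 h2; aesop

/-- `S` is an atomic decomposition of the partition `π`. -/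
def IsAtomicDecomp (π : Setoid X) (S : Set (Setoid X)) : Prop :=
  (∀ a ∈ S, IsAtom a) ∧ sSup S = π

/-- `S` is a minimal atomic decomposition of `π`. -/
def IsMinAtomicDecomp (π : Setoid X) (S : Set (Setoid X)) : Prop :=
  IsAtomicDecomp π S ∧ ∀ T ⊂ S, ¬ IsAtomicDecomp π T

/-- `𝔑 π`: the number of minimal atomic decompositions of `π`. -/
noncomputable def numMinDecomp (π : Setoid X) : ℕ :=
  {S | IsMinAtomicDecomp π S}.ncard

/-- The graph on `X` whose edges are the nonsingleton blocks of the atoms in `S`. -/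
def atomGraph (S : Set (Setoid X)) : SimpleGraph X where
  Adj a b := a ≠ b ∧ pairSetoid a b ∈ S
  symm := by
    constructor
    intro a b ⟨h1, h2⟩
    refine ⟨h1.symm, ?_⟩
    have h : pairSetoid b a = pairSetoid a b := by
      apply Setoid.ext; intro u v
      show _ ∨ _ ↔ _ ∨ _; tauto
    rw [h]; exact h2
  loopless := by constructor; intro a ⟨h, _⟩; exact h rfl


/-! For distinct `x y z`, the atoms `{x, y}` and `{y, z}` join to the partition with block
`{x, y, z}`, and by transitivity the atom `{x, z}` lies below that join. Adding it to the
decomposition therefore gives a second decomposition with one more atom. -/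

section

variable {α : Type*} [DecidableEq α]

lemma pairSetoid_comm (x y : α) : pairSetoid y x = pairSetoid x y :=
  Setoid.ext fun _ _ => by show _ ∨ _ ↔ _ ∨ _; tauto

lemma pairSetoid_le_iff {x y : α} {r : Setoid α} : pairSetoid x y ≤ r ↔ r x y := by
  refine ⟨fun h => h (Or.inr (Or.inl ⟨rfl, rfl⟩)), fun hxy => ?_⟩
  rintro a b (rfl | ⟨rfl, rfl⟩ | ⟨rfl, rfl⟩)
  exacts [r.refl a, hxy, r.symm hxy]

lemma pairSetoid_isAtom {x y : α} (hxy : x ≠ y) : IsAtom (pairSetoid x y) := by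
  refine ⟨fun h => hxy (pairSetoid_le_iff.1 h.le), fun r hr => ?_⟩
  by_contra hr_ne
  obtain ⟨u, v, huv, hne⟩ : ∃ u v, r u v ∧ u ≠ v := by
    by_contra! hr_id
    exact hr_ne (le_bot_iff.1 fun u v huv => hr_id u v huv)
  have hr_xy : r x y := by
    rcases hr.le huv with h | ⟨rfl, rfl⟩ | ⟨rfl, rfl⟩
    exacts [absurd h hne, huv, r.symm huv]
  exact hr.not_ge (pairSetoid_le_iff.2 hr_xy)

lemma pairSetoid_eq_pairSetoid_iff {x y u v : α} (hxy : x ≠ y) :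
    pairSetoid x y = pairSetoid u v ↔ x = u ∧ y = v ∨ x = v ∧ y = u := by
  refine ⟨fun h => ?_, ?_⟩
  · rcases pairSetoid_le_iff.1 h.le with h | h | h
    exacts [absurd h hxy, Or.inl h, Or.inr h]
  · rintro (⟨rfl, rfl⟩ | ⟨rfl, rfl⟩)
    exacts [rfl, pairSetoid_comm _ _]

lemma pairSetoid_le_sup (x y z : α) : pairSetoid x z ≤ pairSetoid x y ⊔ pairSetoid y z :=
  pairSetoid_le_iff.2 <|
    Setoid.trans' _ (pairSetoid_le_iff.1 le_sup_left) (pairSetoid_le_iff.1 le_sup_right)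

end

lemma IsAtomicDecomp.insert {α : Type*} {π a : Setoid α} {S : Set (Setoid α)}
    (hS : IsAtomicDecomp π S) (ha : IsAtom a) (haπ : a ≤ π) : IsAtomicDecomp π (insert a S) :=
  ⟨Set.forall_mem_insert.2 ⟨ha, hS.1⟩, by rw [sSup_insert, hS.2, sup_eq_right.2 haπ]⟩

/-- For `|X| ≥ 3`, the partition lattice is not half-factorial: some partition
admits two atomic decompositions of different cardinalities. -/
theorem not_half_factorial (h : 3 ≤ Fintype.card X) :
    ∃ (π : Setoid X) (S S' : Set (Setoid X)),
      IsAtomicDecomp π S ∧ IsAtomicDecomp π S' ∧ S.ncard ≠ S'.ncard := by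
  obtain ⟨x, y, z, hxy, hxz, hyz⟩ := Fintype.two_lt_card_iff.mp h
  set S : Set (Setoid X) := {pairSetoid x y, pairSetoid y z}
  have hS : IsAtomicDecomp (pairSetoid x y ⊔ pairSetoid y z) S := by
    refine ⟨?_, sSup_pair⟩
    rintro a (rfl | rfl)
    exacts [pairSetoid_isAtom hxy, pairSetoid_isAtom hyz]
  have hxz_notMem : pairSetoid x z ∉ S := by
    simp [S, pairSetoid_eq_pairSetoid_iff hxz, hxy, hxz.symm, hyz.symm]
  refine ⟨_, S, insert (pairSetoid x z) S, hS,
    hS.insert (pairSetoid_isAtom hxz) (pairSetoid_le_sup x y z), ?_⟩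
  rw [Set.ncard_insert_of_notMem hxz_notMem S.toFinite]
  omega
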